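/- Let Γ be a Polish group, G ≤ Γ a dense subgroup, and X a stochastically continuous stationary Γ-process. Then for every A in the product σ-algebra ℬ^Γ, one has ℙ_X(R_g⁻¹(A) △ A) = 0 for all g∈G if and only if ℙ_X(R_γ⁻¹(A) △ A) = 0 for all γ∈Γ. -/

import Mathlib

open MeasureTheory ProbabilityTheory Filter Topology symmDiff

noncomputable section

namespace Paper

variable {G : Type*} {Ω : Type*}

/-- The distribution of a `G`-process: the pushforward of `P` on `ℝ^G`. -/
def procLaw [MeasurableSpace Ω] (P : Measure Ω) (X : G → Ω → ℝ) : Measure (G → ℝ) :=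
  Measure.map (fun ω g => X g ω) P

/-- The left translation `R_g` of `ℝ^G`, `R_g((x_h)_h) = (x_{g⁻¹ h})_h`. -/
def shiftMap [Group G] (g : G) : (G → ℝ) → G → ℝ := fun x h => x (g⁻¹ * h)

/-- The (possibly non-invertible) right-style translation `Q_g((x_h)_h) = (x_{g h})_h`. -/
def transMap [Mul G] (g : G) : (G → ℝ) → G → ℝ := fun x h => x (g * h)

/-- (Left) stationarity of a `G`-process. -/
def Stationary [Mul G] [MeasurableSpace Ω] (P : Measure Ω) (X : G → Ω → ℝ) : Prop :=
  ∀ g : G, procLaw P (fun h => X (g * h)) = procLaw P X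

/-- Ergodicity of a stationary `G`-process: every a.s. translation-invariant measurable set
in `ℝ^G` has law-measure `0` or `1`. -/
def ErgodicProcess [Group G] [MeasurableSpace Ω] (P : Measure Ω) (X : G → Ω → ℝ) : Prop :=
  ∀ E : Set (G → ℝ), MeasurableSet E →
    (∀ g : G, procLaw P X ((shiftMap g ⁻¹' E) ∆ E) = 0) →
    procLaw P X E = 0 ∨ procLaw P X E = 1

/-- Weak mixing of a stationary `G`-process: the diagonal product system
`{R_g × R_g}` on `(ℝ^G × ℝ^G, ℙ_X ⊗ ℙ_X)` is ergodic. -/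
def WeaklyMixingProcess [Group G] [MeasurableSpace Ω] (P : Measure Ω) (X : G → Ω → ℝ) : Prop :=
  ∀ E : Set ((G → ℝ) × (G → ℝ)), MeasurableSet E →
    (∀ g : G, ((procLaw P X).prod (procLaw P X))
        (((fun p => (shiftMap g p.1, shiftMap g p.2)) ⁻¹' E) ∆ E) = 0) →
    ((procLaw P X).prod (procLaw P X)) E = 0 ∨ ((procLaw P X).prod (procLaw P X)) E = 1

/-- Separability in probability of a `G`-process. -/
def SeparableInProbability [MeasurableSpace Ω] (P : Measure Ω) (X : G → Ω → ℝ) : Prop :=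
  ∃ S : Set G, S.Countable ∧
    ∀ g : G, ∃ s : ℕ → G, (∀ n, s n ∈ S) ∧
      TendstoInMeasure P (fun n => X (s n)) atTop (X g)

/-- The finite dimensional distribution of the process along `gs : Fin n → G`. -/
def fdd [MeasurableSpace Ω] (P : Measure Ω) (X : G → Ω → ℝ) {n : ℕ} (gs : Fin n → G) :
    Measure (Fin n → ℝ) :=
  Measure.map (fun ω i => X (gs i) ω) P

/-- A measure on `ℝⁿ` is infinitely divisible if for every `m` it is the `m`-fold
convolution power of some probability measure. -/
def InfinitelyDivisible {n : ℕ} (μ : Measure (Fin n → ℝ)) : Prop :=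
  ∀ m : ℕ, 0 < m → ∃ ν : Measure (Fin n → ℝ), IsProbabilityMeasure ν ∧
    μ = Measure.map (fun x : Fin m → Fin n → ℝ => ∑ i, x i) (Measure.pi fun _ => ν)

/-- A `G`-process is infinitely divisible if all its finite dimensional
distributions are infinitely divisible. -/
def InfinitelyDivisibleProcess [MeasurableSpace Ω] (P : Measure Ω) (X : G → Ω → ℝ) : Prop :=
  ∀ (n : ℕ) (gs : Fin n → G), InfinitelyDivisible (fdd P X gs)

/-- Stochastic continuity of a process indexed by a topological group (or semigroup). -/
def StochasticallyContinuous [TopologicalSpace G] [MeasurableSpace Ω]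
    (P : Measure Ω) (X : G → Ω → ℝ) : Prop :=
  ∀ g₀ : G, TendstoInMeasure P X (𝓝 g₀) (X g₀)

/-- All finite dimensional characteristic functions of the process are nowhere vanishing. -/
def CharFunNonVanishing [MeasurableSpace Ω] (P : Measure Ω) (X : G → Ω → ℝ) : Prop :=
  ∀ (n : ℕ) (gs : Fin n → G) (t : Fin n → ℝ),
    (∫ x, Complex.exp (Complex.I * ((∑ i, t i * x i : ℝ) : ℂ)) ∂(fdd P X gs)) ≠ 0

/-- A measure on `ℝⁿ` is a (possibly degenerate) Gaussian measure iff each of its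
one-dimensional linear-functional pushforwards is a real Gaussian. -/
def IsGaussianMeasure {n : ℕ} (μ : Measure (Fin n → ℝ)) : Prop :=
  ∀ t : Fin n → ℝ, ∃ (m : ℝ) (v : NNReal),
    Measure.map (fun x => ∑ i, t i * x i) μ = gaussianReal m v

/-- A Gaussian `G`-process: all finite dimensional distributions are
(possibly degenerate) Gaussian. -/
def GaussianProcess [MeasurableSpace Ω] (P : Measure Ω) (X : G → Ω → ℝ) : Prop :=
  ∀ (n : ℕ) (gs : Fin n → G), IsGaussianMeasure (fdd P X gs)

/-- Ergodicity of a probability preserving `Θ`-system (maps need not be invertible). -/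
def ErgodicSystem {Θ 𝕏 : Type*} [MeasurableSpace 𝕏] (ξ : Measure 𝕏) (T : Θ → 𝕏 → 𝕏) : Prop :=
  ∀ A : Set 𝕏, MeasurableSet A → (∀ θ : Θ, ξ ((T θ ⁻¹' A) ∆ A) = 0) →
    ξ A = 0 ∨ ξ A = 1

/-- A probability preserving automorphism: a bi-measurable measure-preserving bijection
between full-measure measurable subsets. -/
def IsPPAutomorphism [MeasurableSpace Ω] (P : Measure Ω) (T : Ω → Ω) : Prop :=
  Measurable T ∧ (∀ A : Set Ω, MeasurableSet A → P (T ⁻¹' A) = P A) ∧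
  ∃ (A B : Set Ω) (σ : Ω → Ω), MeasurableSet A ∧ MeasurableSet B ∧
    P A = 1 ∧ P B = 1 ∧ Measurable σ ∧ Set.MapsTo T A B ∧ Set.MapsTo σ B A ∧
    Set.InvOn σ T A B

/-!
Write `f γ = ℙ_X ((R_γ)⁻¹ A ∆ A)`. Every `R_γ` preserves `ℙ_X`, so `f` is subadditive,
`f (a b) ≤ f a + f b`; hence `f γ ≤ f (γ g⁻¹)` for `g ∈ G` when `A` is `G`-invariant, and by
density of `G` it suffices that `f γ → 0` as `γ → 1`. For a cylinder `{x | x_h ∈ s}` with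
`ℙ(X_h ∈ ∂s) = 0` this is stochastic continuity, and such cylinders generate `ℬ^Γ` because all
but countably many reals are non-atoms of the law of `X_h`. The sets with `f γ → 0` form an
algebra, and `ℙ_X ((R_γ)⁻¹ A ∆ A)` is `2`-Lipschitz in `A` for the distance `ℙ_X (A ∆ B)`,
uniformly in `γ`, so the property passes to every set approximated by that algebra, which is
measure-dense in `ℬ^Γ`.
-/

section

open Set Metric MeasurableSpace
open scoped ENNReal

theorem _root_.MeasureTheory.TendstoInMeasure.tendsto_measure_preimage_symmDiff
    {ι Ω E : Type*} [MeasurableSpace Ω] [PseudoMetricSpace E] [MeasurableSpace E]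
    [OpensMeasurableSpace E] {μ : Measure Ω} [IsFiniteMeasure μ] {l : Filter ι}
    {Y : ι → Ω → E} {Z : Ω → E} (hY : TendstoInMeasure μ Y l Z) (hZ : Measurable Z) {s : Set E}
    (hs : μ (Z ⁻¹' frontier s) = 0) :
    Tendsto (fun i => μ ((Y i ⁻¹' s) ∆ (Z ⁻¹' s))) l (𝓝 0) := by
  set K : ℝ → Set E := fun r => cthickening r s ∩ cthickening r sᶜ
  have hK : Tendsto (fun r => μ (Z ⁻¹' K r)) (𝓝[>] 0) (𝓝 0) := by
    have hlim := tendsto_measure_biInter_gt (μ := μ) (s := fun r => Z ⁻¹' K r) (a := 0)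
      (fun _ _ =>
        (hZ (isClosed_cthickening.inter isClosed_cthickening).measurableSet).nullMeasurableSet)
      (fun _ _ _ hij => preimage_mono (inter_subset_inter (cthickening_mono hij _)
        (cthickening_mono hij _))) ⟨1, one_pos, measure_ne_top _ _⟩
    have hfrontier : ⋂ r > 0, Z ⁻¹' K r = Z ⁻¹' frontier s := by
      rw [frontier_eq_closure_inter_closure, closure_eq_iInter_cthickening,
        closure_eq_iInter_cthickening]
      ext ω
      simp only [K, mem_iInter, mem_preimage, mem_inter_iff, imp_and, forall_and]
    rwa [hfrontier, hs] at hlim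
  rw [ENNReal.tendsto_nhds_zero]
  intro ε hε
  have hε2 : 0 < ε / 2 := ENNReal.half_pos hε.ne'
  obtain ⟨r, hKr, hr⟩ := ((hK.eventually (ge_mem_nhds hε2)).and self_mem_nhdsWithin).exists
  filter_upwards [(tendstoInMeasure_iff_dist.1 hY r hr).eventually (ge_mem_nhds hε2)] with i hi
  have hsub : (Y i ⁻¹' s) ∆ (Z ⁻¹' s) ⊆ {ω | r ≤ dist (Y i ω) (Z ω)} ∪ Z ⁻¹' K r := by
    intro ω hω
    rcases le_or_gt r (dist (Y i ω) (Z ω)) with hfar | hnear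
    · exact Or.inl hfar
    have hle : dist (Z ω) (Y i ω) ≤ r := (dist_comm _ _).trans_le hnear.le
    right
    rcases hω with ⟨hYs, hZs⟩ | ⟨hZs, hYs⟩
    · exact ⟨mem_cthickening_of_dist_le _ _ r s hYs hle, self_subset_cthickening _ hZs⟩
    · exact ⟨self_subset_cthickening _ hZs, mem_cthickening_of_dist_le _ _ r sᶜ hYs hle⟩
  calc μ ((Y i ⁻¹' s) ∆ (Z ⁻¹' s))
      ≤ μ {ω | r ≤ dist (Y i ω) (Z ω)} + μ (Z ⁻¹' K r) :=
        (measure_mono hsub).trans (measure_union_le _ _)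
    _ ≤ ε / 2 + ε / 2 := add_le_add hi hKr
    _ = ε := ENNReal.add_halves ε

theorem _root_.Real.borel_le_generateFrom_null_frontier (ν : Measure ℝ) [SFinite ν] :
    borel ℝ ≤ generateFrom {s | MeasurableSet s ∧ ν (frontier s) = 0} := by
  set D := {c : ℝ | ν {c} = 0}
  have hD : Dense D := by
    have hcount : Dᶜ.Countable := (Measure.countable_meas_level_set_pos measurable_id).mono
      fun c hc => by simpa [D, pos_iff_ne_zero] using hc
    simpa using hcount.dense_compl ℝ
  rw [hD.borel_eq_generateFrom_Ico_mem]
  refine generateFrom_mono ?_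
  rintro _ ⟨a, ha, b, hb, hab, rfl⟩
  refine ⟨measurableSet_Ico, ?_⟩
  rw [frontier_Ico hab, insert_eq]
  exact measure_union_null ha hb

section MeasurePreservingFamily

variable {α ι : Type*} [MeasurableSpace α] {μ : Measure α}

theorem _root_.MeasureTheory.MeasurePreserving.measure_preimage_comp_symmDiff_le {S T : α → α}
    (hT : MeasurePreserving T μ μ) (s : Set α) :
    μ (((S ∘ T) ⁻¹' s) ∆ s) ≤ μ ((S ⁻¹' s) ∆ s) + μ ((T ⁻¹' s) ∆ s) :=
  calc μ (((S ∘ T) ⁻¹' s) ∆ s)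
      ≤ μ (T ⁻¹' ((S ⁻¹' s) ∆ s)) + μ ((T ⁻¹' s) ∆ s) := by
        rw [preimage_symmDiff]; exact measure_symmDiff_le _ _ _
    _ ≤ μ ((S ⁻¹' s) ∆ s) + μ ((T ⁻¹' s) ∆ s) := add_le_add (hT.measure_preimage_le _) le_rfl

theorem _root_.MeasureTheory.MeasurePreserving.measure_preimage_symmDiff_le {T : α → α}
    (hT : MeasurePreserving T μ μ) (s t : Set α) :
    μ ((T ⁻¹' s) ∆ s) ≤ μ ((T ⁻¹' t) ∆ t) + 2 * μ (s ∆ t) :=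
  calc μ ((T ⁻¹' s) ∆ s)
      ≤ μ ((T ⁻¹' s) ∆ (T ⁻¹' t)) + μ ((T ⁻¹' t) ∆ s) := measure_symmDiff_le _ _ _
    _ ≤ μ (s ∆ t) + (μ ((T ⁻¹' t) ∆ t) + μ (t ∆ s)) := by
        rw [← preimage_symmDiff]
        exact add_le_add (hT.measure_preimage_le _) (measure_symmDiff_le _ _ _)
    _ = μ ((T ⁻¹' t) ∆ t) + 2 * μ (s ∆ t) := by
        rw [symmDiff_comm t s]
        ring

theorem _root_.MeasureTheory.isSetAlgebra_setOf_tendsto_measure_preimage_symmDiff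
    (T : ι → α → α) (l : Filter ι) :
    IsSetAlgebra {s | MeasurableSet s ∧ Tendsto (fun i => μ ((T i ⁻¹' s) ∆ s)) l (𝓝 0)} where
  empty_mem := ⟨.empty, by simpa using tendsto_const_nhds⟩
  compl_mem _ hs := ⟨hs.1.compl, by simpa only [preimage_compl, compl_symmDiff_compl] using hs.2⟩
  union_mem s t hs ht := by
    refine ⟨hs.1.union ht.1, ?_⟩
    refine tendsto_of_tendsto_of_tendsto_of_le_of_le tendsto_const_nhds
      (by simpa using hs.2.add ht.2) (fun _ => zero_le) fun i => ?_
    rw [preimage_union]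
    exact (measure_mono (union_symmDiff_union_subset ..)).trans (measure_union_le _ _)

theorem _root_.MeasureTheory.tendsto_measure_preimage_symmDiff_of_generateFrom
    [IsFiniteMeasure μ] {T : ι → α → α} {l : Filter ι} (hT : ∀ i, MeasurePreserving (T i) μ μ)
    {𝒢 : Set (Set α)} (hgen : ‹MeasurableSpace α› ≤ generateFrom 𝒢)
    (h𝒢 : ∀ s ∈ 𝒢, MeasurableSet s ∧ Tendsto (fun i => μ ((T i ⁻¹' s) ∆ s)) l (𝓝 0))
    {s : Set α} (hs : MeasurableSet s) :
    Tendsto (fun i => μ ((T i ⁻¹' s) ∆ s)) l (𝓝 0) := by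
  set 𝒜 := {s | MeasurableSet s ∧ Tendsto (fun i => μ ((T i ⁻¹' s) ∆ s)) l (𝓝 0)}
  have hdense : μ.MeasureDense 𝒜 :=
    .of_generateFrom_isSetAlgebra_finite μ
      (isSetAlgebra_setOf_tendsto_measure_preimage_symmDiff T l)
      (le_antisymm (hgen.trans (generateFrom_mono h𝒢)) (generateFrom_le fun t ht => ht.1))
  rw [ENNReal.tendsto_nhds_zero]
  intro ε hε
  have hε3 : 0 < ε / 3 := ENNReal.div_pos hε.ne' ENNReal.ofNat_ne_top
  obtain ⟨r, -, hr, hrε⟩ := ENNReal.lt_iff_exists_real_btwn.1 hε3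
  obtain ⟨t, ht, hst⟩ := hdense.approx s hs (measure_ne_top μ s) r (ENNReal.ofReal_pos.1 hr)
  filter_upwards [ht.2.eventually (ge_mem_nhds hε3)] with i hi
  calc μ ((T i ⁻¹' s) ∆ s) ≤ μ ((T i ⁻¹' t) ∆ t) + 2 * μ (s ∆ t) :=
        (hT i).measure_preimage_symmDiff_le s t
    _ ≤ ε / 3 + 2 * (ε / 3) := by gcongr; exact (hst.trans hrε).le
    _ = ε := by rw [two_mul, ← add_assoc, ENNReal.add_thirds]

end MeasurePreservingFamily

theorem _root_.Dense.eq_zero_of_subadditive_of_tendsto_one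
    {Γ : Type*} [Group Γ] [TopologicalSpace Γ] [IsTopologicalGroup Γ] {f : Γ → ℝ≥0∞}
    (hmul : ∀ a b, f (a * b) ≤ f a + f b)
    (hf : Tendsto f (𝓝 1) (𝓝 0)) {S : Set Γ} (hS : Dense S) (hfS : ∀ g ∈ S, f g = 0)
    (γ : Γ) : f γ = 0 := by
  have := mem_closure_iff_nhdsWithin_neBot.1 (hS γ)
  have hshift : Tendsto (fun g => γ * g⁻¹) (𝓝 γ) (𝓝 1) := by
    simpa using (continuous_const.mul continuous_inv).tendsto (f := fun g : Γ => γ * g⁻¹) γ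
  refine nonpos_iff_eq_zero.1
    (ge_of_tendsto (hf.comp (hshift.mono_left (nhdsWithin_le_nhds (s := S)))) ?_)
  filter_upwards [self_mem_nhdsWithin] with g hg
  calc f γ = f (γ * g⁻¹ * g) := by rw [inv_mul_cancel_right]
    _ ≤ f (γ * g⁻¹) + f g := hmul _ _
    _ = f (γ * g⁻¹) := by rw [hfS g hg, add_zero]

end

section Translation

open MeasurableSpace

variable {Γ Ω : Type*} [MeasurableSpace Ω] {P : Measure Ω} {X : Γ → Ω → ℝ}

instance isFiniteMeasure_procLaw [IsFiniteMeasure P] : IsFiniteMeasure (procLaw P X) := by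
  rw [procLaw]
  infer_instance

theorem shiftMap_mul [Group Γ] (a b : Γ) : shiftMap (a * b) = shiftMap a ∘ shiftMap b := by
  funext x h
  simp [shiftMap, mul_assoc]

theorem measurable_shiftMap [Group Γ] (g : Γ) : Measurable (shiftMap g) :=
  measurable_pi_lambda _ fun _ => measurable_pi_apply _

theorem Stationary.measurePreserving_shiftMap [Group Γ] (hmeas : ∀ γ, Measurable (X γ))
    (hstat : Stationary P X) (g : Γ) :
    MeasurePreserving (shiftMap g) (procLaw P X) (procLaw P X) where
  measurable := measurable_shiftMap g
  map_eq := by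
    rw [procLaw, Measure.map_map (measurable_shiftMap g) (measurable_pi_lambda _ hmeas)]
    exact hstat g⁻¹

def continuityCylinders (P : Measure Ω) (X : Γ → Ω → ℝ) : Set (Set (Γ → ℝ)) :=
  {S | ∃ h s, MeasurableSet s ∧ P (X h ⁻¹' frontier s) = 0 ∧ S = (fun x => x h) ⁻¹' s}

theorem pi_le_generateFrom_continuityCylinders [SFinite P] (hmeas : ∀ γ, Measurable (X γ)) :
    MeasurableSpace.pi ≤ generateFrom (continuityCylinders P X) := by
  refine iSup_le fun h => comap_le_iff_le_map.2 ?_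
  calc (inferInstance : MeasurableSpace ℝ)
      ≤ generateFrom {s | MeasurableSet s ∧ P.map (X h) (frontier s) = 0} :=
        Real.borel_le_generateFrom_null_frontier _
    _ ≤ _ := by
        refine generateFrom_le fun s ⟨hs, hfr⟩ => measurableSet_generateFrom ?_
        rw [Measure.map_apply (hmeas h) isClosed_frontier.measurableSet] at hfr
        exact ⟨h, s, hs, hfr, rfl⟩

theorem tendsto_procLaw_preimage_shiftMap_symmDiff_cylinder [Group Γ] [TopologicalSpace Γ]
    [IsTopologicalGroup Γ] [IsFiniteMeasure P] (hmeas : ∀ γ, Measurable (X γ))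
    (hcont : StochasticallyContinuous P X) {h : Γ} {s : Set ℝ} (hs : MeasurableSet s)
    (hfr : P (X h ⁻¹' frontier s) = 0) :
    Tendsto
      (fun γ => procLaw P X ((shiftMap γ ⁻¹' ((fun x => x h) ⁻¹' s)) ∆ ((fun x => x h) ⁻¹' s)))
      (𝓝 1) (𝓝 0) := by
  have hS : MeasurableSet ((fun x : Γ → ℝ => x h) ⁻¹' s) := measurable_pi_apply h hs
  have hmove : Tendsto (fun γ : Γ => γ⁻¹ * h) (𝓝 1) (𝓝 h) := by
    simpa using (continuous_inv.mul continuous_const).tendsto (f := fun γ : Γ => γ⁻¹ * h) 1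
  have hY : TendstoInMeasure P (fun γ => X (γ⁻¹ * h)) (𝓝 1) (X h) :=
    fun ε hε => (hcont h ε hε).comp hmove
  convert hY.tendsto_measure_preimage_symmDiff (hmeas h) hfr using 2 with γ
  rw [procLaw, Measure.map_apply (measurable_pi_lambda _ hmeas)
    (((measurable_shiftMap γ) hS).symmDiff hS)]
  rfl

theorem tendsto_procLaw_preimage_shiftMap_symmDiff [Group Γ] [TopologicalSpace Γ]
    [IsTopologicalGroup Γ] [IsFiniteMeasure P] (hmeas : ∀ γ, Measurable (X γ))
    (hstat : Stationary P X) (hcont : StochasticallyContinuous P X) {A : Set (Γ → ℝ)}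
    (hA : MeasurableSet A) :
    Tendsto (fun γ => procLaw P X ((shiftMap γ ⁻¹' A) ∆ A)) (𝓝 1) (𝓝 0) := by
  refine tendsto_measure_preimage_symmDiff_of_generateFrom
    (hstat.measurePreserving_shiftMap hmeas)
    (pi_le_generateFrom_continuityCylinders (P := P) hmeas) ?_ hA
  rintro _ ⟨h, s, hs, hfr, rfl⟩
  exact ⟨measurable_pi_apply h hs,
    tendsto_procLaw_preimage_shiftMap_symmDiff_cylinder hmeas hcont hs hfr⟩

end Translation

theorem invariant_dense_iff_invariant_general
    {Γ : Type*} [Group Γ] [TopologicalSpace Γ] [IsTopologicalGroup Γ]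
    (G : Subgroup Γ) (hG : Dense (G : Set Γ))
    {Ω : Type*} [MeasurableSpace Ω] (P : Measure Ω) [IsProbabilityMeasure P]
    (X : Γ → Ω → ℝ) (hmeas : ∀ γ, Measurable (X γ)) (hstat : Stationary P X)
    (hcont : StochasticallyContinuous P X) :
    ∀ A : Set (Γ → ℝ), MeasurableSet A →
      ((∀ g ∈ G, procLaw P X ((shiftMap g ⁻¹' A) ∆ A) = 0) ↔
        (∀ γ : Γ, procLaw P X ((shiftMap γ ⁻¹' A) ∆ A) = 0)) := by
  intro A hA
  refine ⟨fun hGinv => hG.eq_zero_of_subadditive_of_tendsto_one (fun a b => ?_)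
    (tendsto_procLaw_preimage_shiftMap_symmDiff hmeas hstat hcont hA) hGinv, fun h g _ => h g⟩
  rw [shiftMap_mul]
  exact (hstat.measurePreserving_shiftMap hmeas b).measure_preimage_comp_symmDiff_le A

/-- for a stochastically continuous stationary process over a Polish
group `Γ` and a dense subgroup `G ≤ Γ`, a measurable set `A ⊆ ℝ^Γ` is a.s. invariant
under all translations from `G` iff it is a.s. invariant under all translations
from `Γ`. -/
theorem invariant_dense_iff_invariant
    {Γ : Type*} [Group Γ] [TopologicalSpace Γ] [IsTopologicalGroup Γ] [PolishSpace Γ]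
    (G : Subgroup Γ) (hG : Dense (G : Set Γ))
    {Ω : Type*} [MeasurableSpace Ω] (P : Measure Ω) [IsProbabilityMeasure P]
    (X : Γ → Ω → ℝ) (hmeas : ∀ γ, Measurable (X γ)) (hstat : Stationary P X)
    (hcont : StochasticallyContinuous P X) :
    ∀ A : Set (Γ → ℝ), MeasurableSet A →
      ((∀ g ∈ G, procLaw P X ((shiftMap g ⁻¹' A) ∆ A) = 0) ↔
        (∀ γ : Γ, procLaw P X ((shiftMap γ ⁻¹' A) ∆ A) = 0)) :=
  invariant_dense_iff_invariant_general G hG P X hmeas hstat hcont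

end Paper
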